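/- arXiv:2403.18449 — 9 statements merged into one kernel-verified Lean document; each statement's English description precedes it below -/
import Mathlib

section
/- If a monoid S admits a monoid homomorphism θ : S → ℕ with the unique factorization property (if θ(a) = m + n then there exist unique b, c ∈ S with a = bc, θ(b) = m, θ(c) = n), then S is equidivisible. -/
/-- θ : S → ℕ is a monoid homomorphism with the unique factorization property. -/
def UFPHom {S : Type*} [Monoid S] (θ : S → ℕ) : Prop :=
  θ 1 = 0 ∧ (∀ x y : S, θ (x * y) = θ x + θ y) ∧
  ∀ (a : S) (m n : ℕ), θ a = m + n →
    ∃! p : S × S, a = p.1 * p.2 ∧ θ p.1 = m ∧ θ p.2 = n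

theorem ufp_implies_equidivisible {S : Type*} [Monoid S] (θ : S → ℕ)
    (h : UFPHom θ) :
    ∀ x y u v : S, x * y = u * v →
      ∃ t : S, (u = x * t ∧ y = t * v) ∨ (x = u * t ∧ v = t * y) := by
  obtain ⟨h1, hmul, huniq⟩ := h
  intro x y u v hxy
  rcases le_total (θ x) (θ u) with hle | hle
  · -- u = x * t, y = t * v
    obtain ⟨k, hk⟩ := Nat.exists_eq_add_of_le hle
    obtain ⟨⟨b, c⟩, ⟨hbc, hb, hc⟩, _⟩ := huniq u (θ x) k hk
    have hfact := huniq (x * y) (θ x) (θ y) (hmul x y)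
    have h1' : x * y = x * y ∧ θ x = θ x ∧ θ y = θ y := ⟨rfl, rfl, rfl⟩
    have h2' : x * y = b * (c * v) ∧ θ b = θ x ∧ θ (c * v) = θ y := by
      refine ⟨by rw [hxy, hbc, mul_assoc], hb, ?_⟩
      have : θ (x * y) = θ (u * v) := by rw [hxy]
      rw [hmul, hmul, hk] at this
      rw [hmul, hc]
      omega
    have := hfact.unique (y₁ := (x, y)) (y₂ := (b, c * v)) h1' h2'
    have hx : x = b := congrArg Prod.fst this
    refine ⟨c, Or.inl ⟨by rw [hbc, hx], congrArg Prod.snd this⟩⟩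
  · -- x = u * t, v = t * y
    obtain ⟨k, hk⟩ := Nat.exists_eq_add_of_le hle
    obtain ⟨⟨b, c⟩, ⟨hbc, hb, hc⟩, _⟩ := huniq x (θ u) k hk
    have hfact := huniq (u * v) (θ u) (θ v) (hmul u v)
    have h1' : u * v = u * v ∧ θ u = θ u ∧ θ v = θ v := ⟨rfl, rfl, rfl⟩
    have h2' : u * v = b * (c * y) ∧ θ b = θ u ∧ θ (c * y) = θ v := by
      refine ⟨by rw [← hxy, hbc, mul_assoc], hb, ?_⟩
      have : θ (x * y) = θ (u * v) := by rw [hxy]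
      rw [hmul, hmul, hk] at this
      rw [hmul, hc]
      omega
    have := hfact.unique (y₁ := (u, v)) (y₂ := (b, c * y)) h1' h2'
    have hu : u = b := congrArg Prod.fst this
    refine ⟨c, Or.inr ⟨by rw [hbc, hu], congrArg Prod.snd this⟩⟩
end

section
/- A monoid S is free if and only if S is equidivisible and there exists a monoid homomorphism θ : S → ℕ such that θ⁻¹(0) consists of exactly the identity of S. (Levi's theorem) -/
/-- A monoid is equidivisible if xy = uv implies one factorization refines the other. -/
def Equidivisible (S : Type*) [Monoid S] : Prop :=
  ∀ x y u v : S, x * y = u * v →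
    ∃ t : S, (u = x * t ∧ y = t * v) ∨ (x = u * t ∧ v = t * y)

section Aux

variable {S : Type} [Monoid S]

/-- An atom: a nonidentity element with no nontrivial factorization. -/
def LeviAtom (x : S) : Prop := x ≠ 1 ∧ ∀ u v : S, x = u * v → u = 1 ∨ v = 1

theorem levi_theta_zero {θ : S → ℕ} (hker : θ ⁻¹' {0} = {(1 : S)}) {x : S} :
    θ x = 0 ↔ x = 1 := by
  constructor
  · intro h
    have : x ∈ θ ⁻¹' {0} := h
    rwa [hker] at this
  · rintro rfl
    have : (1 : S) ∈ θ ⁻¹' {0} := by rw [hker]; rfl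
    exact this

theorem levi_surj {θ : S → ℕ} (hmul : ∀ x y : S, θ (x * y) = θ x + θ y)
    (hker : θ ⁻¹' {0} = {(1 : S)}) :
    ∀ n : ℕ, ∀ x : S, θ x = n →
      ∃ l : List {a : S // LeviAtom a}, (l.map Subtype.val).prod = x := by
  intro n
  induction n using Nat.strong_induction_on with
  | _ n ih =>
    intro x hx
    by_cases hx1 : x = 1
    · exact ⟨[], by simp [hx1]⟩
    by_cases hatom : LeviAtom x
    · exact ⟨[⟨x, hatom⟩], by simp⟩
    · have : ∃ u v : S, x = u * v ∧ u ≠ 1 ∧ v ≠ 1 := by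
        unfold LeviAtom at hatom
        push_neg at hatom
        obtain ⟨u, v, huv, hu, hv⟩ := hatom hx1
        exact ⟨u, v, huv, hu, hv⟩
      obtain ⟨u, v, huv, hu, hv⟩ := this
      have hθu : θ u ≠ 0 := fun h => hu ((levi_theta_zero hker).mp h)
      have hθv : θ v ≠ 0 := fun h => hv ((levi_theta_zero hker).mp h)
      have hsum : θ u + θ v = n := by rw [← hmul, ← huv, hx]
      have hun : θ u < n := by omega
      have hvn : θ v < n := by omega
      obtain ⟨lu, hlu⟩ := ih (θ u) hun u rfl
      obtain ⟨lv, hlv⟩ := ih (θ v) hvn v rfl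
      exact ⟨lu ++ lv, by rw [List.map_append, List.prod_append, hlu, hlv, huv]⟩

theorem levi_inj (hE : Equidivisible S) {θ : S → ℕ}
    (hmul : ∀ x y : S, θ (x * y) = θ x + θ y) (hker : θ ⁻¹' {0} = {(1 : S)}) :
    ∀ l l' : List {a : S // LeviAtom a},
      (l.map Subtype.val).prod = (l'.map Subtype.val).prod → l = l' := by
  have hnil : ∀ l : List {a : S // LeviAtom a},
      (l.map Subtype.val).prod = 1 → l = [] := by
    rintro (_ | ⟨b, r⟩) h
    · rfl
    · exfalso
      simp only [List.map_cons, List.prod_cons] at h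
      have : θ (b.val * (r.map Subtype.val).prod) = 0 := by
        rw [h, levi_theta_zero hker]
      rw [hmul] at this
      exact b.2.1 ((levi_theta_zero hker).mp (by omega))
  intro l
  induction l with
  | nil => intro l' h; exact (hnil l' h.symm).symm
  | cons a r ihr =>
    rintro (_ | ⟨b, r'⟩) h
    · exact hnil _ h
    · simp only [List.map_cons, List.prod_cons] at h
      obtain ⟨t, ht | ht⟩ := hE _ _ _ _ h
      · obtain ⟨hb, hr⟩ := ht
        rcases b.2.2 _ _ hb with h1 | h1
        · exact absurd h1 a.2.1
        · rw [h1, mul_one] at hb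
          rw [h1, one_mul] at hr
          have : a = b := Subtype.ext hb.symm
          rw [this, ihr r' hr]
      · obtain ⟨ha, hr⟩ := ht
        rcases a.2.2 _ _ ha with h1 | h1
        · exact absurd h1 b.2.1
        · rw [h1, mul_one] at ha
          rw [h1, one_mul] at hr
          have : a = b := Subtype.ext ha
          rw [this, ihr r' hr.symm]

end Aux

/-- Levi's theorem: a monoid is free iff it is equidivisible and admits a monoid
homomorphism to ℕ whose kernel is trivial. -/
theorem levi_free_monoid {S : Type} [Monoid S] :
    (∃ A : Type, Nonempty (S ≃* FreeMonoid A)) ↔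
    (Equidivisible S ∧ ∃ θ : S → ℕ, θ 1 = 0 ∧
      (∀ x y : S, θ (x * y) = θ x + θ y) ∧ θ ⁻¹' {0} = {(1 : S)}) := by
  constructor
  · rintro ⟨A, ⟨e⟩⟩
    constructor
    · intro x y u v h
      have h' : (e x).toList ++ (e y).toList = (e u).toList ++ (e v).toList := by
        have := congrArg e h
        rw [map_mul, map_mul] at this
        exact congrArg FreeMonoid.toList this
      rcases List.append_eq_append_iff.mp h' with ⟨a', ha1, ha2⟩ | ⟨c', hc1, hc2⟩
      · refine ⟨e.symm (FreeMonoid.ofList a'), Or.inl ⟨?_, ?_⟩⟩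
        · have : e u = e x * FreeMonoid.ofList a' := by
            apply FreeMonoid.toList.injective
            simpa using ha1
          calc u = e.symm (e u) := (e.symm_apply_apply u).symm
            _ = e.symm (e x * FreeMonoid.ofList a') := by rw [this]
            _ = x * e.symm (FreeMonoid.ofList a') := by
                rw [map_mul, e.symm_apply_apply]
        · have : e y = FreeMonoid.ofList a' * e v := by
            apply FreeMonoid.toList.injective
            simpa using ha2
          calc y = e.symm (e y) := (e.symm_apply_apply y).symm
            _ = e.symm (FreeMonoid.ofList a' * e v) := by rw [this]
            _ = e.symm (FreeMonoid.ofList a') * v := by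
                rw [map_mul, e.symm_apply_apply]
      · refine ⟨e.symm (FreeMonoid.ofList c'), Or.inr ⟨?_, ?_⟩⟩
        · have : e x = e u * FreeMonoid.ofList c' := by
            apply FreeMonoid.toList.injective
            simpa using hc1
          calc x = e.symm (e x) := (e.symm_apply_apply x).symm
            _ = e.symm (e u * FreeMonoid.ofList c') := by rw [this]
            _ = u * e.symm (FreeMonoid.ofList c') := by
                rw [map_mul, e.symm_apply_apply]
        · have : e v = FreeMonoid.ofList c' * e y := by
            apply FreeMonoid.toList.injective
            simpa using hc2
          calc v = e.symm (e v) := (e.symm_apply_apply v).symm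
            _ = e.symm (FreeMonoid.ofList c' * e y) := by rw [this]
            _ = e.symm (FreeMonoid.ofList c') * y := by
                rw [map_mul, e.symm_apply_apply]
    · refine ⟨fun s => (e s).length, ?_, ?_, ?_⟩
      · simp [map_one]
      · intro x y
        show (e (x * y)).length = (e x).length + (e y).length
        rw [map_mul, FreeMonoid.length_mul]
      · ext x
        simp only [Set.mem_preimage, Set.mem_singleton_iff]
        constructor
        · intro h
          have : e x = 1 := by
            have := FreeMonoid.length_eq_zero.mp h
            exact this
          have := congrArg e.symm this
          simpa using this
        · rintro rfl; simp [map_one]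
  · rintro ⟨hE, θ, _, hmul, hker⟩
    refine ⟨{a : S // LeviAtom a}, ⟨?_⟩⟩
    let φ : FreeMonoid {a : S // LeviAtom a} →* S := FreeMonoid.lift Subtype.val
    have hφ : ∀ w : FreeMonoid {a : S // LeviAtom a},
        φ w = (w.toList.map Subtype.val).prod := fun w => FreeMonoid.lift_apply _ _
    have hbij : Function.Bijective φ := by
      constructor
      · intro w w' h
        rw [hφ, hφ] at h
        have := levi_inj hE hmul hker _ _ h
        exact FreeMonoid.toList.injective this
      · intro x
        obtain ⟨l, hl⟩ := levi_surj hmul hker (θ x) x rfl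
        exact ⟨FreeMonoid.ofList l, by rw [hφ]; exact hl⟩
    exact (MulEquiv.ofBijective φ hbij).symm
end

section
/- Every monoid S admitting a monoid homomorphism θ : S → ℕ with the unique factorization property is a free monoid. -/
/-!
The atoms, i.e. the elements `s` with `θ s = 1`, freely generate `S`. By the unique factorization
property, an element `s` with `θ s = n + 1` splits as an atom times an element `t` with `θ t = n`,
which gives a factorization into atoms by induction on `θ s`; and since such a split is unique,
two words of atoms with the same product agree letter by letter.
-/

namespace UFPHom

variable {S : Type*} [Monoid S] {θ : S → ℕ}

theorem eq_and_eq_of_mul_eq_mul (h : UFPHom θ) {b c b' c' : S} (hb : θ b = θ b')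
    (hc : θ c = θ c') (he : b * c = b' * c') : b = b' ∧ c = c' := by
  obtain ⟨p, -, huniq⟩ := h.2.2 (b * c) (θ b) (θ c) (h.2.1 b c)
  simpa using (huniq (b, c) ⟨rfl, rfl, rfl⟩).trans (huniq (b', c') ⟨he, hb.symm, hc.symm⟩).symm

theorem eq_one_of_apply_eq_zero (h : UFPHom θ) {a : S} (ha : θ a = 0) : a = 1 :=
  (h.eq_and_eq_of_mul_eq_mul (c := 1) (c' := a) (by rw [ha, h.1]) (by rw [ha, h.1])
    (by rw [mul_one, one_mul])).1

variable (θ) in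
def ofAtoms : FreeMonoid {s : S // θ s = 1} →* S :=
  FreeMonoid.lift Subtype.val

theorem ofAtoms_of_mul (a : {s : S // θ s = 1}) (w : FreeMonoid {s : S // θ s = 1}) :
    ofAtoms θ (.of a * w) = a.1 * ofAtoms θ w := by
  rw [map_mul, ofAtoms, FreeMonoid.lift_eval_of]

theorem ofAtoms_of_mul_ne_one (h : UFPHom θ) (a : {s : S // θ s = 1})
    (w : FreeMonoid {s : S // θ s = 1}) : ofAtoms θ (.of a * w) ≠ 1 := by
  intro he
  have := congrArg θ he
  rw [ofAtoms_of_mul, h.2.1, a.2, h.1] at this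
  omega

theorem ofAtoms_injective (h : UFPHom θ) : Function.Injective (ofAtoms θ) := by
  intro w w' he
  induction w using FreeMonoid.inductionOn' generalizing w' with
  | one =>
    cases w' with
    | one => rfl
    | of_mul a' v' => exact absurd ((map_one _).symm.trans he).symm (h.ofAtoms_of_mul_ne_one a' v')
  | of_mul a v ih =>
    cases w' with
    | one => exact absurd (he.trans (map_one _)) (h.ofAtoms_of_mul_ne_one a v)
    | of_mul a' v' =>
      rw [ofAtoms_of_mul, ofAtoms_of_mul] at he
      have hθ : θ (ofAtoms θ v) = θ (ofAtoms θ v') := by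
        have := congrArg θ he
        rw [h.2.1, h.2.1, a.2, a'.2] at this
        omega
      obtain ⟨ha, hv⟩ := h.eq_and_eq_of_mul_eq_mul (a.2.trans a'.2.symm) hθ he
      rw [Subtype.ext ha, ih hv]

theorem ofAtoms_surjective (h : UFPHom θ) : Function.Surjective (ofAtoms θ) := by
  suffices ∀ n (s : S), θ s = n → ∃ w, ofAtoms θ w = s from fun s ↦ this _ s rfl
  intro n
  induction n with
  | zero => exact fun s hs ↦ ⟨1, by rw [map_one, h.eq_one_of_apply_eq_zero hs]⟩
  | succ k ih =>
    intro s hs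
    obtain ⟨⟨a, t⟩, ⟨rfl, ha, ht⟩, -⟩ := h.2.2 s 1 k (by omega)
    obtain ⟨w, rfl⟩ := ih t ht
    exact ⟨.of ⟨a, ha⟩ * w, ofAtoms_of_mul _ _⟩

end UFPHom

theorem ufp_implies_free {S : Type} [Monoid S] (θ : S → ℕ)
    (h : UFPHom θ) : ∃ A : Type, Nonempty (S ≃* FreeMonoid A) :=
  ⟨_, ⟨(MulEquiv.ofBijective _ ⟨h.ofAtoms_injective, h.ofAtoms_surjective⟩).symm⟩⟩
end

section
/- If S is a k-monoid with respect to δ : S → ℕᵏ where k ≥ 1, and δ is not surjective, then S admits a monoid homomorphism δ' : S → ℕ^(k-1) with the UFP, so S is also a (k-1)-monoid. -/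
/-!
The degrees `δ(S)` form a submonoid of `ℕᵏ` which, by the factorization property, is closed
under passing to smaller vectors. If every coordinate were positive on some degree, the sum of
those degrees would be positive everywhere, its multiples would dominate every vector, and `δ`
would be surjective. So some coordinate of `δ` vanishes identically, and deleting it keeps the
factorization property.
-/

/-- δ : S → ℕᵏ makes S a k-monoid: δ is a monoid homomorphism with the
unique factorization property. -/
def KUFP {S : Type*} [Monoid S] {k : ℕ} (δ : S → Fin k → ℕ) : Prop :=
  δ 1 = 0 ∧ (∀ x y : S, δ (x * y) = δ x + δ y) ∧
  ∀ (x : S) (m n : Fin k → ℕ), δ x = m + n →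
    ∃! p : S × S, x = p.1 * p.2 ∧ δ p.1 = m ∧ δ p.2 = n

theorem AddSubmonoid.eq_top_of_isLowerSet {ι : Type*} [Fintype ι] {M : AddSubmonoid (ι → ℕ)}
    (hM : IsLowerSet (M : Set (ι → ℕ))) (hpos : ∀ i, ∃ m ∈ M, m i ≠ 0) : M = ⊤ := by
  choose f hfM hf using hpos
  have hsum : ∑ i, f i ∈ M := _root_.sum_mem fun i _ => hfM i
  have hsum_pos : ∀ i, 1 ≤ (∑ j, f j) i := fun i =>
    calc 1 ≤ f i i := Nat.one_le_iff_ne_zero.2 (hf i)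
      _ ≤ ∑ j, f j i := Finset.single_le_sum (f := fun j => f j i) (fun _ _ => Nat.zero_le _) (Finset.mem_univ i)
      _ = (∑ j, f j) i := (Finset.sum_apply i _ _).symm
  refine eq_top_iff.2 fun m _ => hM (fun i => ?_) (nsmul_mem hsum (∑ j, m j))
  calc m i ≤ ∑ j, m j := Finset.single_le_sum (fun _ _ => Nat.zero_le _) (Finset.mem_univ i)
    _ ≤ (∑ j, m j) * (∑ j, f j) i := Nat.le_mul_of_pos_right _ (hsum_pos i)

namespace KUFP

variable {S : Type*} [Monoid S] {k : ℕ}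

section

variable {δ : S → Fin k → ℕ}

def rangeAddSubmonoid (h : KUFP δ) : AddSubmonoid (Fin k → ℕ) where
  carrier := Set.range δ
  add_mem' := by
    rintro _ _ ⟨x, rfl⟩ ⟨y, rfl⟩
    exact ⟨x * y, h.2.1 x y⟩
  zero_mem' := ⟨1, h.1⟩

theorem isLowerSet_range (h : KUFP δ) : IsLowerSet (Set.range δ) := by
  rintro a m hma ⟨x, rfl⟩
  obtain ⟨p, ⟨-, hp, -⟩, -⟩ := h.2.2 x m (δ x - m) (add_tsub_cancel_of_le hma).symm
  exact ⟨p.1, hp⟩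

theorem exists_forall_apply_eq_zero (h : KUFP δ) (hns : ¬ Function.Surjective δ) :
    ∃ i, ∀ x, δ x i = 0 := by
  by_contra! hpos
  have htop : h.rangeAddSubmonoid = ⊤ :=
    AddSubmonoid.eq_top_of_isLowerSet h.isLowerSet_range fun i =>
      let ⟨x, hx⟩ := hpos i
      ⟨δ x, ⟨x, rfl⟩, hx⟩
  exact hns fun m => show m ∈ h.rangeAddSubmonoid from htop ▸ AddSubmonoid.mem_top m

end

theorem removeNth {δ : S → Fin (k + 1) → ℕ} (h : KUFP δ) (i : Fin (k + 1))
    (hi : ∀ x, δ x i = 0) : KUFP fun x => i.removeNth (δ x) := by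
  have hdeg : ∀ x m, δ x = i.insertNth 0 m ↔ i.removeNth (δ x) = m := fun x m => by
    simp [Fin.eq_insertNth_iff, hi x]
  refine ⟨congrArg i.removeNth h.1, fun x y => congrArg i.removeNth (h.2.1 x y), ?_⟩
  intro x m n hx
  have hsplit : δ x = i.insertNth 0 m + i.insertNth 0 n := by
    rw [← Fin.insertNth_add, zero_add, hdeg]
    exact hx
  simpa only [hdeg] using h.2.2 x _ _ hsplit

end KUFP

theorem kmonoid_not_surjective {S : Type*} [Monoid S] {k : ℕ} (hk : 1 ≤ k)
    (δ : S → Fin k → ℕ) (h : KUFP δ)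
    (hns : ¬ Function.Surjective δ) :
    ∃ δ' : S → Fin (k - 1) → ℕ, KUFP δ' := by
  obtain ⟨n, rfl⟩ : ∃ n, k = n + 1 := ⟨k - 1, by omega⟩
  obtain ⟨i, hi⟩ := h.exists_forall_apply_eq_zero hns
  exact ⟨_, h.removeNth i hi⟩
end

section
/- Let S be a k-monoid with alphabets X₁,…,X_k. If for all i ≠ j, every a ∈ Xᵢ and b ∈ Xⱼ commute (ab = ba), then S is isomorphic to the direct product S₁ × … × S_k of its coordinate free submonoids, where Sₗ = {a ∈ S : δ(a)ᵢ = 0 for i ≠ l}. -/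
/-- The submonoid Sₗ of elements whose size is supported on coordinate l only. -/
def CoordSubmonoid {S : Type*} [Monoid S] {k : ℕ} (δ : S → Fin k → ℕ)
    (h : KUFP δ) (l : Fin k) : Submonoid S where
  carrier := {a : S | ∀ i : Fin k, i ≠ l → δ a i = 0}
  one_mem' := by intro i _; simp [h.1]
  mul_mem' := by
    intro a b ha hb i hi
    have := h.2.1 a b
    simp [this, ha i hi, hb i hi]

/-!
If two elements of Sᵢ and Sⱼ (i ≠ j) are factored into letters, each letter of one commutes with
each letter of the other, so Sᵢ and Sⱼ commute elementwise and multiplying out a tuple gives a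
homomorphism ∏ₗ Sₗ → S. The UFP, iterated along the sizes δ(x)₁e₁, …, δ(x)ₖeₖ, says that every
x ∈ S is such a product of a unique tuple.
-/

namespace KUFP

variable {S : Type*} [Monoid S] {k : ℕ} {δ : S → Fin k → ℕ}

theorem delta_mul (h : KUFP δ) (x y : S) : δ (x * y) = δ x + δ y :=
  h.2.1 x y

theorem eq_and_eq_of_mul_eq_mul (h : KUFP δ) {a b c d : S} (he : a * b = c * d)
    (hac : δ a = δ c) (hbd : δ b = δ d) : a = c ∧ b = d := by
  obtain ⟨p, -, hp⟩ := h.2.2 (a * b) (δ a) (δ b) (h.delta_mul a b)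
  have hab := hp (a, b) ⟨rfl, rfl, rfl⟩
  have hcd := hp (c, d) ⟨he, hac.symm, hbd.symm⟩
  exact Prod.ext_iff.mp (hab.trans hcd.symm)

theorem eq_one_of_delta_eq_zero (h : KUFP δ) {x : S} (hx : δ x = 0) : x = 1 :=
  (h.eq_and_eq_of_mul_eq_mul (by rw [mul_one, one_mul] : x * 1 = 1 * x)
    (hx.trans h.1.symm) (h.1.trans hx.symm)).1

theorem delta_prod_ofFn (h : KUFP δ) {n : ℕ} (f : Fin n → S) :
    δ (List.ofFn f).prod = ∑ i, δ (f i) := by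
  induction n with
  | zero => simp [h.1]
  | succ n ih => simp [List.ofFn_succ, Fin.sum_univ_succ, h.delta_mul, ih]

theorem exists_prod_ofFn_eq (h : KUFP δ) {n : ℕ} (m : Fin n → Fin k → ℕ) {x : S}
    (hx : δ x = ∑ i, m i) : ∃ f : Fin n → S, (List.ofFn f).prod = x ∧ ∀ i, δ (f i) = m i := by
  induction n generalizing x with
  | zero => exact ⟨Fin.elim0, by simp [h.eq_one_of_delta_eq_zero (by simpa using hx)], nofun⟩
  | succ n ih =>
    rw [Fin.sum_univ_succ] at hx
    obtain ⟨⟨p, q⟩, ⟨rfl, hp, hq⟩, -⟩ := h.2.2 x _ _ hx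
    obtain ⟨g, rfl, hg⟩ := ih (fun i => m i.succ) hq
    refine ⟨Fin.cons p g, by simp [List.ofFn_succ], fun i => ?_⟩
    cases i using Fin.cases with
    | zero => simpa using hp
    | succ i => simpa using hg i

theorem eq_of_prod_ofFn_eq (h : KUFP δ) {n : ℕ} {f g : Fin n → S}
    (hfg : (List.ofFn f).prod = (List.ofFn g).prod) (hδ : ∀ i, δ (f i) = δ (g i)) : f = g := by
  induction n with
  | zero => exact funext nofun
  | succ n ih =>
    rw [List.ofFn_succ, List.ofFn_succ, List.prod_cons, List.prod_cons] at hfg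
    obtain ⟨h0, htail⟩ := h.eq_and_eq_of_mul_eq_mul hfg (hδ 0)
      (by simp only [h.delta_prod_ofFn, hδ])
    have htail_eq : Fin.tail f = Fin.tail g := ih htail fun i => hδ i.succ
    rw [← Fin.cons_self_tail f, ← Fin.cons_self_tail g, h0, htail_eq]

theorem mem_coordSubmonoid_iff (h : KUFP δ) {l : Fin k} {a : S} :
    a ∈ CoordSubmonoid δ h l ↔ δ a = Pi.single l (δ a l) := by
  refine ⟨fun ha => funext fun i => ?_, fun ha i hi => by rw [ha, Pi.single_eq_of_ne hi]⟩
  rcases eq_or_ne i l with rfl | hi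
  · simp
  · rw [Pi.single_eq_of_ne hi, ha i hi]

theorem commute_of_forall_delta_eq_single (h : KUFP δ) {j : Fin k} {a b : S}
    (hb : b ∈ CoordSubmonoid δ h j) (ha : ∀ g, δ g = Pi.single j 1 → Commute a g) :
    Commute a b := by
  generalize hn : δ b j = n
  induction n generalizing b with
  | zero =>
    have hb1 : b = 1 :=
      h.eq_one_of_delta_eq_zero (by rw [h.mem_coordSubmonoid_iff.mp hb, hn, Pi.single_zero])
    exact hb1 ▸ Commute.one_right a
  | succ n ih =>
    have hsplit : δ b = Pi.single j n + Pi.single j 1 := by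
      rw [h.mem_coordSubmonoid_iff.mp hb, hn, ← Pi.single_add]
    obtain ⟨⟨p, q⟩, ⟨rfl, hp, hq⟩, -⟩ := h.2.2 _ _ _ hsplit
    have hpj : p ∈ CoordSubmonoid δ h j := by rw [h.mem_coordSubmonoid_iff, hp]; simp
    exact (ih hpj (by simp [hp])).mul_right (ha q hq)

theorem commute_of_mem_coordSubmonoid (h : KUFP δ)
    (hc : ∀ (i j : Fin k), i ≠ j → ∀ a b : S,
      δ a = Pi.single i 1 → δ b = Pi.single j 1 → a * b = b * a)
    {i j : Fin k} (hij : i ≠ j) {a b : S}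
    (ha : a ∈ CoordSubmonoid δ h i) (hb : b ∈ CoordSubmonoid δ h j) : Commute a b :=
  h.commute_of_forall_delta_eq_single hb fun g hg =>
    (h.commute_of_forall_delta_eq_single ha fun g' hg' => (hc i j hij g' g hg' hg).symm).symm

theorem delta_prod_ofFn_coord (h : KUFP δ) (y : ∀ l, CoordSubmonoid δ h l) (l : Fin k) :
    δ (List.ofFn fun i => (y i : S)).prod l = δ (y l) l := by
  rw [h.delta_prod_ofFn, Finset.sum_apply, Finset.sum_eq_single l
    (fun i _ hi => (y i).2 l hi.symm) (fun hl => absurd (Finset.mem_univ l) hl)]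

end KUFP

theorem MonoidHom.noncommPiCoprod_subtype_eq_prod_ofFn {M : Type*} [Monoid M] {k : ℕ}
    (N : Fin k → Submonoid M)
    (hcomm : Pairwise fun i j => ∀ (x : N i) (y : N j), Commute ((N i).subtype x) ((N j).subtype y))
    (y : ∀ l, N l) :
    MonoidHom.noncommPiCoprod (fun l => (N l).subtype) hcomm y
      = (List.ofFn fun l => (y l : M)).prod := by
  simp only [MonoidHom.noncommPiCoprod, MonoidHom.coe_mk, OneHom.coe_mk,
    ← List.toFinset_finRange, List.ofFn_eq_map]
  exact Finset.noncommProd_toFinset _ _ _ (List.nodup_finRange k)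

theorem kmonoid_commuting_alphabets_direct_product {S : Type*} [Monoid S] {k : ℕ}
    (δ : S → Fin k → ℕ) (h : KUFP δ)
    (hc : ∀ (i j : Fin k), i ≠ j → ∀ a b : S,
      δ a = Pi.single i 1 → δ b = Pi.single j 1 → a * b = b * a) :
    Nonempty (S ≃* ∀ l : Fin k, CoordSubmonoid δ h l) := by
  let Ψ := MonoidHom.noncommPiCoprod (fun l => (CoordSubmonoid δ h l).subtype)
    fun i j hij a b => h.commute_of_mem_coordSubmonoid hc hij a.2 b.2
  have hΨ (y : ∀ l, CoordSubmonoid δ h l) : Ψ y = (List.ofFn fun l => (y l : S)).prod :=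
    MonoidHom.noncommPiCoprod_subtype_eq_prod_ofFn _ _ y
  have hδ (y : ∀ l, CoordSubmonoid δ h l) (l : Fin k) :
      δ (y l) = Pi.single l (δ (Ψ y) l) := by
    rw [hΨ, h.delta_prod_ofFn_coord, ← h.mem_coordSubmonoid_iff]
    exact (y l).2
  have hinj : Function.Injective Ψ := fun y z hyz => by
    have hyz' := h.eq_of_prod_ofFn_eq ((hΨ y).symm.trans (hyz.trans (hΨ z)))
      fun l => by rw [hδ y, hδ z, hyz]
    exact funext fun l => Subtype.ext (congrFun hyz' l)
  have hsurj : Function.Surjective Ψ := fun x => by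
    obtain ⟨f, hfx, hf⟩ := h.exists_prod_ofFn_eq (fun l => Pi.single l (δ x l))
      (Finset.univ_sum_single (δ x)).symm
    refine ⟨fun l => ⟨f l, ?_⟩, by rw [hΨ, ← hfx]⟩
    rw [h.mem_coordSubmonoid_iff, hf, Pi.single_eq_same]
  exact ⟨(MulEquiv.ofBijective Ψ ⟨hinj, hsurj⟩).symm⟩
end

section
/- The direct product of two singly aligned monoids is singly aligned. -/
/-- The principal right ideal aS of a monoid. -/
def rIdeal {S : Type*} [Monoid S] (a : S) : Set S := Set.range (fun s => a * s)

/-- A monoid is singly aligned if every nonempty intersection of principal right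
ideals is a principal right ideal. -/
def SinglyAligned (S : Type*) [Monoid S] : Prop :=
  ∀ a b : S, (rIdeal a ∩ rIdeal b).Nonempty →
    ∃ c : S, rIdeal a ∩ rIdeal b = rIdeal c

lemma rIdeal_prod {S T : Type*} [Monoid S] [Monoid T] (a : S × T) :
    rIdeal a = rIdeal a.1 ×ˢ rIdeal a.2 := by
  ext x
  constructor
  · rintro ⟨s, rfl⟩
    exact ⟨⟨s.1, rfl⟩, ⟨s.2, rfl⟩⟩
  · rintro ⟨⟨s, hs⟩, ⟨t, ht⟩⟩
    exact ⟨(s, t), Prod.ext hs ht⟩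

theorem prod_singly_aligned {S T : Type*} [Monoid S] [Monoid T]
    (hS : SinglyAligned S) (hT : SinglyAligned T) : SinglyAligned (S × T) := by
  intro a b ⟨x, hx1, hx2⟩
  rw [rIdeal_prod a] at hx1
  rw [rIdeal_prod b] at hx2
  obtain ⟨c1, hc1⟩ := hS a.1 b.1 ⟨x.1, hx1.1, hx2.1⟩
  obtain ⟨c2, hc2⟩ := hT a.2 b.2 ⟨x.2, hx1.2, hx2.2⟩
  refine ⟨(c1, c2), ?_⟩
  rw [rIdeal_prod a, rIdeal_prod b, rIdeal_prod (c1, c2)]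
  rw [← hc1, ← hc2]
  ext y
  simp only [Set.mem_inter_iff, Set.mem_prod]
  tauto
end

section
/- Let S be a k-monoid and suppose c ∈ aS ∩ bS ≠ ∅. Then there exist d, t ∈ S with c = dt, d ∈ aS ∩ bS, and δ(d) = δ(a) ∨ δ(b) (the componentwise join in ℕᵏ). Consequently aS ∩ bS equals the union of the dS over all d ∈ aS ∩ bS with δ(d) = δ(a) ∨ δ(b). -/
theorem kmonoid_intersection_ideals {S : Type*} [Monoid S] {k : ℕ}
    (δ : S → Fin k → ℕ) (h : KUFP δ) (a b : S) :
    (∀ c ∈ rIdeal a ∩ rIdeal b, ∃ d t : S, c = d * t ∧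
      d ∈ rIdeal a ∩ rIdeal b ∧ δ d = δ a ⊔ δ b) ∧
    rIdeal a ∩ rIdeal b =
      ⋃ d ∈ {d : S | d ∈ rIdeal a ∩ rIdeal b ∧ δ d = δ a ⊔ δ b}, rIdeal d := by
  obtain ⟨-, hmul, hufp⟩ := h
  have key : ∀ c ∈ rIdeal a ∩ rIdeal b, ∃ d t : S, c = d * t ∧
      d ∈ rIdeal a ∩ rIdeal b ∧ δ d = δ a ⊔ δ b := by
    rintro c ⟨⟨s, hs⟩, ⟨s', hs'⟩⟩
    simp only at hs hs'
    set j : Fin k → ℕ := δ a ⊔ δ b with hj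
    have hca : δ c = δ a + δ s := by rw [← hs, hmul]
    have hcb : δ c = δ b + δ s' := by rw [← hs', hmul]
    have hja : ∀ i, δ a i ≤ j i := fun i => le_sup_left
    have hjb : ∀ i, δ b i ≤ j i := fun i => le_sup_right
    have hjc : ∀ i, j i ≤ δ c i := by
      intro i
      have h1 : δ c i = δ a i + δ s i := by rw [hca]; rfl
      have h2 : δ c i = δ b i + δ s' i := by rw [hcb]; rfl
      simp only [hj, Pi.sup_apply, sup_le_iff]
      omega
    have hfac : δ c = j + (δ c - j) := by
      funext i
      have := hjc i
      simp only [Pi.add_apply, Pi.sub_apply]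
      omega
    obtain ⟨⟨d, t⟩, ⟨hcdt, hdj, htj⟩, huniq⟩ := hufp c j (δ c - j) hfac
    simp only at hcdt hdj htj huniq
    refine ⟨d, t, hcdt, ⟨?_, ?_⟩, hdj⟩
    · -- d ∈ rIdeal a
      have hsfac : δ s = (j - δ a) + (δ c - j) := by
        funext i
        have h1 : δ c i = δ a i + δ s i := by rw [hca]; rfl
        have := hjc i; have := hja i
        simp only [Pi.add_apply, Pi.sub_apply]
        omega
      obtain ⟨⟨u, v⟩, ⟨hsuv, hu, hv⟩, -⟩ := hufp s (j - δ a) (δ c - j) hsfac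
      simp only at hsuv hu hv
      have hau : δ (a * u) = j := by
        rw [hmul, hu]
        funext i
        have := hja i
        simp only [Pi.add_apply, Pi.sub_apply]
        omega
      have hc2 : c = (a * u) * v := by rw [← hs, hsuv, mul_assoc]
      have := huniq (a * u, v) ⟨hc2, hau, hv⟩
      exact ⟨u, (Prod.ext_iff.mp this).1⟩
    · -- d ∈ rIdeal b
      have hsfac : δ s' = (j - δ b) + (δ c - j) := by
        funext i
        have h2 : δ c i = δ b i + δ s' i := by rw [hcb]; rfl
        have := hjc i; have := hjb i
        simp only [Pi.add_apply, Pi.sub_apply]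
        omega
      obtain ⟨⟨u, v⟩, ⟨hsuv, hu, hv⟩, -⟩ := hufp s' (j - δ b) (δ c - j) hsfac
      simp only at hsuv hu hv
      have hbu : δ (b * u) = j := by
        rw [hmul, hu]
        funext i
        have := hjb i
        simp only [Pi.add_apply, Pi.sub_apply]
        omega
      have hc2 : c = (b * u) * v := by rw [← hs', hsuv, mul_assoc]
      have := huniq (b * u, v) ⟨hc2, hbu, hv⟩
      exact ⟨u, (Prod.ext_iff.mp this).1⟩
  refine ⟨key, ?_⟩
  ext c
  simp only [Set.mem_iUnion, Set.mem_setOf_eq, exists_prop]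
  constructor
  · intro hc
    obtain ⟨d, t, hcdt, hd, hdelta⟩ := key c hc
    exact ⟨d, ⟨hd, hdelta⟩, t, hcdt.symm⟩
  · rintro ⟨d, ⟨⟨⟨u, hu⟩, ⟨v, hv⟩⟩, -⟩, w, hw⟩
    simp only at hu hv hw
    constructor
    · exact ⟨u * w, by simp only; rw [← mul_assoc, hu, hw]⟩
    · exact ⟨v * w, by simp only; rw [← mul_assoc, hv, hw]⟩
end

section
/- Let S be a finitely aligned k-monoid. If aS ∩ bS ≠ ∅, then aS ∩ bS = DS for some finite set D of pairwise incomparable elements (a finite generalized prefix code), all of size δ(a) ∨ δ(b). -/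
/-- A monoid is finitely aligned if every nonempty intersection of principal
right ideals is a finitely generated right ideal. -/
def FinitelyAligned (S : Type*) [Monoid S] : Prop :=
  ∀ a b : S, (rIdeal a ∩ rIdeal b).Nonempty →
    ∃ X : Finset S, rIdeal a ∩ rIdeal b = ⋃ x ∈ X, rIdeal x

lemma rIdeal_trans {S : Type*} [Monoid S] {p x : S} (hx : x ∈ rIdeal p) :
    rIdeal x ⊆ rIdeal p := by
  obtain ⟨q, rfl⟩ := hx
  rintro _ ⟨w, rfl⟩
  exact ⟨q * w, (mul_assoc _ _ _).symm⟩

lemma self_mem_rIdeal {S : Type*} [Monoid S] (a : S) : a ∈ rIdeal a :=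
  ⟨1, (mul_one a)⟩

/-- Key step: any element of aS ∩ bS lies in pS for some p ∈ aS ∩ bS of
degree δ a ⊔ δ b. -/
lemma key_step {S : Type*} [Monoid S] {k : ℕ} {δ : S → Fin k → ℕ} (h : KUFP δ)
    (a b : S) {x : S} (hx : x ∈ rIdeal a ∩ rIdeal b) :
    ∃ p, δ p = δ a ⊔ δ b ∧ p ∈ rIdeal a ∩ rIdeal b ∧ x ∈ rIdeal p := by
  obtain ⟨⟨s, hs⟩, ⟨t, ht⟩⟩ := hx
  obtain ⟨h1, hmul, hufp⟩ := h
  set m : Fin k → ℕ := δ a ⊔ δ b with hm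
  have hdx1 : δ x = δ a + δ s := by rw [← hs, hmul]
  have hdx2 : δ x = δ b + δ t := by rw [← ht, hmul]
  have hax : ∀ i, δ a i ≤ δ x i := fun i => by
    have := congrFun hdx1 i; simp [this]
  have hbx : ∀ i, δ b i ≤ δ x i := fun i => by
    have := congrFun hdx2 i; simp [this]
  have hmx : ∀ i, m i ≤ δ x i := fun i => by
    simp only [hm, Pi.sup_apply, sup_le_iff]
    exact ⟨hax i, hbx i⟩
  set n : Fin k → ℕ := fun i => δ x i - m i with hn
  have hsplit : δ x = m + n := by
    funext i; have := hmx i; simp only [Pi.add_apply, hn]; omega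
  obtain ⟨⟨p, q⟩, ⟨hpq, hdp, hdq⟩, huniq⟩ := hufp x m n hsplit
  refine ⟨p, hdp, ⟨?_, ?_⟩, ⟨q, hpq.symm⟩⟩
  · -- p ∈ rIdeal a
    have hds : δ s = (fun i => m i - δ a i) + n := by
      funext i
      have h1 := congrFun hdx1 i
      have h2 := congrFun hsplit i
      have h3 : δ a i ≤ m i := le_sup_left (b := δ b i)
      simp only [Pi.add_apply] at h1 h2 ⊢
      omega
    obtain ⟨⟨s1, s2⟩, ⟨hs12, hds1, hds2⟩, _⟩ := hufp s _ _ hds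
    have hfac : x = (a * s1) * s2 := by rw [← hs, hs12, mul_assoc]
    have hdas1 : δ (a * s1) = m := by
      rw [hmul, hds1]; funext i
      have h3 : δ a i ≤ m i := le_sup_left (b := δ b i)
      simp only [Pi.add_apply]; omega
    have := huniq (a * s1, s2) ⟨hfac, hdas1, hds2⟩
    exact ⟨s1, by simpa using congrArg Prod.fst this⟩
  · -- p ∈ rIdeal b
    have hds : δ t = (fun i => m i - δ b i) + n := by
      funext i
      have h1 := congrFun hdx2 i
      have h2 := congrFun hsplit i
      have h3 : δ b i ≤ m i := le_sup_right (a := δ a i)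
      simp only [Pi.add_apply] at h1 h2 ⊢
      omega
    obtain ⟨⟨t1, t2⟩, ⟨ht12, hdt1, hdt2⟩, _⟩ := hufp t _ _ hds
    have hfac : x = (b * t1) * t2 := by rw [← ht, ht12, mul_assoc]
    have hdbt1 : δ (b * t1) = m := by
      rw [hmul, hdt1]; funext i
      have h3 : δ b i ≤ m i := le_sup_right (a := δ a i)
      simp only [Pi.add_apply]; omega
    have := huniq (b * t1, t2) ⟨hfac, hdbt1, hdt2⟩
    exact ⟨t1, by simpa using congrArg Prod.fst this⟩

theorem finitely_aligned_prefix_code {S : Type*} [Monoid S] {k : ℕ}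
    (δ : S → Fin k → ℕ) (h : KUFP δ) (hfa : FinitelyAligned S)
    (a b : S) (hne : (rIdeal a ∩ rIdeal b).Nonempty) :
    ∃ D : Finset S, (∀ d ∈ D, δ d = δ a ⊔ δ b) ∧
      (∀ d ∈ D, ∀ d' ∈ D, d ≠ d' → rIdeal d ∩ rIdeal d' = ∅) ∧
      rIdeal a ∩ rIdeal b = ⋃ d ∈ D, rIdeal d := by
  classical
  obtain ⟨X, hX⟩ := hfa a b hne
  have hXmem : ∀ x ∈ X, x ∈ rIdeal a ∩ rIdeal b := by
    intro x hx
    rw [hX]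
    exact Set.mem_biUnion hx (self_mem_rIdeal x)
  have hkey : ∀ x : S, x ∈ rIdeal a ∩ rIdeal b →
      ∃ p, δ p = δ a ⊔ δ b ∧ p ∈ rIdeal a ∩ rIdeal b ∧ x ∈ rIdeal p :=
    fun x hx => key_step h a b hx
  choose! f hf1 hf2 hf3 using hkey
  refine ⟨X.image f, ?_, ?_, ?_⟩
  · intro d hd
    obtain ⟨x, hx, rfl⟩ := Finset.mem_image.mp hd
    exact hf1 x (hXmem x hx)
  · intro d hd d' hd' hne'
    obtain ⟨x, hx, rfl⟩ := Finset.mem_image.mp hd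
    obtain ⟨x', hx', rfl⟩ := Finset.mem_image.mp hd'
    by_contra hcon
    obtain ⟨z, ⟨u, hu⟩, ⟨v, hv⟩⟩ := Set.nonempty_iff_ne_empty.mpr hcon
    have hd1 : δ (f x) = δ a ⊔ δ b := hf1 x (hXmem x hx)
    have hd2 : δ (f x') = δ a ⊔ δ b := hf1 x' (hXmem x' hx')
    have hdz1 : δ z = (δ a ⊔ δ b) + δ u := by rw [← hu, h.2.1, hd1]
    have hdz2 : δ z = (δ a ⊔ δ b) + δ v := by rw [← hv, h.2.1, hd2]
    have hduv : δ u = δ v := by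
      have := hdz1.symm.trans hdz2
      exact add_left_cancel this
    obtain ⟨_, _, huniq⟩ := h.2.2 z (δ a ⊔ δ b) (δ u) hdz1
    have e1 := huniq (f x, u) ⟨hu.symm, hd1, rfl⟩
    have e2 := huniq (f x', v) ⟨hv.symm, hd2, hduv.symm⟩
    exact hne' ((Prod.ext_iff.mp (e1.trans e2.symm)).1)
  · apply Set.Subset.antisymm
    · intro y hy
      have := hy
      rw [hX] at this
      simp only [Set.mem_iUnion] at this
      obtain ⟨x, hx, hyx⟩ := this
      refine Set.mem_biUnion (Finset.mem_image_of_mem f hx) ?_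
      exact rIdeal_trans (hf3 x (hXmem x hx)) hyx
    · intro y hy
      simp only [Set.mem_iUnion] at hy
      obtain ⟨d, hd, hyd⟩ := hy
      obtain ⟨x, hx, rfl⟩ := Finset.mem_image.mp hd
      obtain ⟨hpa, hpb⟩ := hf2 x (hXmem x hx)
      exact ⟨rIdeal_trans hpa hyd, rIdeal_trans hpb hyd⟩
end

section
/- Let S be a strict k-monoid and let XS be a finitely generated right ideal such that every element of S is dependent on some element of X (XS is essential). Let m be the join in ℕᵏ of the sizes δ(x) for x ∈ X (X finite and nonempty). Then C_m S ⊆ XS, where C_m = δ⁻¹(m); i.e., XS contains a right ideal generated by a finite maximal generalized prefix code. -/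
theorem strict_kmonoid_essential_contains_Cm {S : Type*} [Monoid S] {k : ℕ}
    (δ : S → Fin k → ℕ) (h : KUFP δ) (hs : Function.Surjective δ)
    (X : Finset S) (hXne : X.Nonempty)
    (hess : ∀ s : S, ∃ x ∈ X, ∃ u v : S, s * u = x * v) :
    ∀ c : S, δ c = X.sup (fun x => δ x) → rIdeal c ⊆ ⋃ x ∈ X, rIdeal x := by
  intro c hc t ht
  obtain ⟨x, hxX, u, v, huv⟩ := hess c
  have hle : δ x ≤ X.sup (fun x => δ x) := Finset.le_sup hxX
  have hsplit : δ c = δ x + (X.sup (fun x => δ x) - δ x) := by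
    rw [hc, add_tsub_cancel_of_le hle]
  obtain ⟨p, ⟨hp1, hp2, hp3⟩, _⟩ := h.2.2 c (δ x) (X.sup (fun x => δ x) - δ x) hsplit
  -- factor c*u in two ways with first-part size δ x
  have hδcu : δ (c * u) = δ x + (δ p.2 + δ u) := by
    rw [h.2.1, hp1, h.2.1, hp2, add_assoc]
  obtain ⟨q, _, huniq⟩ := h.2.2 (c * u) (δ x) (δ p.2 + δ u) hδcu
  have hδv : δ v = δ p.2 + δ u := by
    have h1 : δ x + δ v = δ x + (δ p.2 + δ u) := by
      rw [← h.2.1, ← huv, hδcu]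
    exact add_left_cancel h1
  have e1 : q = (p.1, p.2 * u) := by
    refine (huniq (p.1, p.2 * u) ?_).symm
    refine ⟨by rw [hp1, mul_assoc], hp2, ?_⟩
    simp [h.2.1]
  have e2 : q = (x, v) := by
    refine (huniq (x, v) ?_).symm
    exact ⟨huv, rfl, hδv⟩
  have hpx : p.1 = x := by
    have := e1.symm.trans e2
    exact congrArg Prod.fst this
  obtain ⟨s, hst⟩ := ht
  refine Set.mem_biUnion hxX ⟨p.2 * s, ?_⟩
  simp only []
  rw [← mul_assoc, ← hpx, ← hp1]
  exact hst
end
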